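/- arXiv:2605.09654 — 4 statements merged into one kernel-verified Lean document; each statement's English description precedes it below -/
import Mathlib

section
/- Under the setting of the Poisson product estimator, taking L = log r for some r > 0 with |log r| ≤ C, we have exp(C)·E[W] = r, i.e., exp(C)·W is an unbiased estimator of the density ratio r. -/
open MeasureTheory ProbabilityTheory

/-!
On the event `{N = k}` the estimator is a product of `k` independent factors, each of mean
`m = 1/2 + log r / (2C)`, and `{N = k}` is independent of them, so `E[W; N = k] = P(N = k) m^k`.
Summing against the Poisson(2C) weights gives the generating function
`E[W] = e^{-2C} e^{2Cm} = e^{-C} r`.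
-/

lemma measurable_prod_range_of_measurable {Ω M : Type*} [MeasurableSpace Ω] [CommMonoid M]
    [MeasurableSpace M] [MeasurableMul₂ M] {N : Ω → ℕ} {f : ℕ → Ω → M}
    (hN : Measurable N) (hf : ∀ j, Measurable (f j)) :
    Measurable fun ω => ∏ j ∈ Finset.range (N ω), f j ω := by
  have hF : Measurable fun p : Ω × ℕ => ∏ j ∈ Finset.range p.2, f j p.1 :=
    measurable_from_prod_countable_left fun k =>
      Finset.measurable_prod (Finset.range k) fun j _ => hf j
  exact hF.comp (measurable_id.prodMk hN)

lemma integrable_prod_range_of_abs_le_one {Ω : Type*} [MeasurableSpace Ω] {μ : Measure Ω}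
    [IsFiniteMeasure μ] {N : Ω → ℕ} {f : ℕ → Ω → ℝ} (hN : Measurable N)
    (hf : ∀ j, Measurable (f j)) (hbound : ∀ᵐ ω ∂μ, ∀ j, |f j ω| ≤ 1) :
    Integrable (fun ω => ∏ j ∈ Finset.range (N ω), f j ω) μ := by
  refine .of_bound (measurable_prod_range_of_measurable hN hf).aestronglyMeasurable 1 ?_
  filter_upwards [hbound] with ω hω
  rw [Real.norm_eq_abs, Finset.abs_prod]
  exact Finset.prod_le_one (fun _ _ => abs_nonneg _) fun j _ => hω j

lemma hasSum_setIntegral_fiber {Ω β E : Type*} [MeasurableSpace Ω] [MeasurableSpace β]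
    [Countable β] [MeasurableSingletonClass β] [NormedAddCommGroup E] [NormedSpace ℝ E]
    {μ : Measure Ω} {N : Ω → β} {f : Ω → E} (hN : Measurable N) (hf : Integrable f μ) :
    HasSum (fun b => ∫ ω in {ω | N ω = b}, f ω ∂μ) (∫ ω, f ω ∂μ) := by
  have hU : (⋃ b, {ω | N ω = b}) = Set.univ := Set.iUnion_eq_univ_iff.2 fun ω => ⟨N ω, rfl⟩
  rw [← setIntegral_univ, ← hU]
  refine hasSum_integral_iUnion (fun b => hN (measurableSet_singleton b))
    (fun b b' hbb' => Set.disjoint_left.2 fun ω (hb : N ω = b) hb' => hbb' (hb ▸ hb')) ?_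
  rw [hU]
  exact hf.integrableOn

lemma hasSum_exp_neg_mul_pow_div_factorial_mul_pow (a m : ℝ) :
    HasSum (fun k : ℕ => Real.exp (-a) * a ^ k / k.factorial * m ^ k) (Real.exp (a * (m - 1))) := by
  have hexp := (NormedSpace.expSeries_div_hasSum_exp (a * m)).mul_left (Real.exp (-a))
  rw [← Real.exp_eq_exp_ℝ, ← Real.exp_add] at hexp
  have hterm : (fun k : ℕ => Real.exp (-a) * a ^ k / k.factorial * m ^ k)
      = fun k => Real.exp (-a) * ((a * m) ^ k / k.factorial) := by
    funext k
    rw [mul_pow]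
    ring
  rwa [hterm, show a * (m - 1) = -a + a * m by ring]

lemma abs_half_add_div_two_mul_le_one {C x : ℝ} (hC : 0 < C) (hx : |x| ≤ C) :
    |1 / 2 + x / (2 * C)| ≤ 1 := by
  have hsplit : 1 / 2 + x / (2 * C) = (C + x) / (2 * C) := by field_simp
  have hC2 : 0 < 2 * C := by linarith
  rw [hsplit, abs_div, abs_of_pos hC2, div_le_one hC2]
  obtain ⟨hx_lower, hx_upper⟩ := abs_le.1 hx
  exact abs_le.2 ⟨by linarith, by linarith⟩

lemma setIntegral_prod_range_eq_measureReal_mul_prod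
    {Ω : Type*} [MeasurableSpace Ω] {μ : Measure Ω} {N : Ω → ℕ} {I : ℕ → Ω → ℝ}
    (hN : Measurable N) (hI : ∀ j, Measurable (I j))
    (hindep : iIndepFun
      (fun j : ℕ => Nat.rec (motive := fun _ => Ω → ℝ) (fun ω => (N ω : ℝ)) (fun k _ => I k) j) μ)
    {g : ℝ → ℝ} (hg : Measurable g) (k : ℕ) :
    ∫ ω in {ω | N ω = k}, ∏ j ∈ Finset.range k, g (I j ω) ∂μ
      = μ.real {ω | N ω = k} * ∏ j ∈ Finset.range k, ∫ ω, g (I j ω) ∂μ := by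
  have hX : ∀ j, Measurable
      (Nat.rec (motive := fun _ => Ω → ℝ) (fun ω => (N ω : ℝ)) (fun k _ => I k) j) := by
    rintro (_ | j)
    exacts [measurable_from_top.comp hN, hI j]
  let f : Fin (k + 1) → ℝ → ℝ := Fin.cases (Set.indicator {(k : ℝ)} 1) fun _ => g
  have hf : ∀ i, Measurable (f i) :=
    Fin.cases (measurable_one.indicator (measurableSet_singleton _)) fun _ => hg
  -- independence of `N, I₀, …, I_{k-1}`, tested against `𝟙_{k}(N) · ∏ g(Iⱼ)`
  have hfactorize := (hindep.precomp (Fin.val_injective (n := k + 1))).integral_fun_prod_comp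
    (f := f) (fun i => (hX i).aemeasurable) (fun i => (hf i).aestronglyMeasurable)
  simp only [f, Fin.prod_univ_succ, Fin.cases_zero, Fin.cases_succ, Fin.val_zero, Fin.val_succ,
    Nat.rec_zero] at hfactorize
  have hs : MeasurableSet {ω | N ω = k} := hN (measurableSet_singleton k)
  have hindicator (ω : Ω) :
      Set.indicator {(k : ℝ)} (1 : ℝ → ℝ) (N ω) = if N ω = k then 1 else 0 := by
    simp [Set.indicator_apply]
  simp only [hindicator, ite_mul, one_mul, zero_mul] at hfactorize
  rw [← integral_indicator hs, ← integral_indicator_one hs]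
  simpa only [Set.indicator_apply, Set.mem_ofPred_eq, Pi.one_apply, Finset.prod_range]
    using hfactorize

theorem poisson_product_estimator_unbiased_ratio_general
    {Ω : Type*} [MeasurableSpace Ω] (μ : Measure Ω) [IsProbabilityMeasure μ]
    (C r : ℝ) (hC : 0 < C) (hr : 0 < r)
    (I : ℕ → Ω → ℝ) (N : Ω → ℕ)
    (hImeas : ∀ j, Measurable (I j)) (hNmeas : Measurable N)
    -- the `Iⱼ` and `N` are jointly independent
    (hIndep : iIndepFun
      (fun j : ℕ => Nat.rec (motive := fun _ => Ω → ℝ) (fun ω => (N ω : ℝ)) (fun k _ => I k) j) μ)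
    (hbound : ∀ j, ∀ᵐ ω ∂μ, |I j ω| ≤ C)
    (hmean : ∀ j, ∫ ω, I j ω ∂μ = Real.log r)
    -- `N ~ Poisson(2C)`
    (hN : ∀ k : ℕ, μ {ω | N ω = k} =
      ENNReal.ofReal (Real.exp (-(2 * C)) * (2 * C) ^ k / (Nat.factorial k)))
    (W : Ω → ℝ)
    (hW : ∀ ω, W ω = ∏ j ∈ Finset.range (N ω), (1 / 2 + I j ω / (2 * C))) :
    Real.exp C * ∫ ω, W ω ∂μ = r := by
  set m := 1 / 2 + Real.log r / (2 * C)
  have hIint (j : ℕ) : Integrable (I j) μ :=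
    .of_bound (hImeas j).aestronglyMeasurable C (by simpa only [Real.norm_eq_abs] using hbound j)
  have hWint : Integrable W μ := funext hW ▸
    integrable_prod_range_of_abs_le_one hNmeas (fun j => by fun_prop)
      (by filter_upwards [ae_all_iff.2 hbound] with ω hω j
          exact abs_half_add_div_two_mul_le_one hC (hω j))
  have hfactor (j : ℕ) : ∫ ω, (1 / 2 + I j ω / (2 * C)) ∂μ = m := by
    rw [integral_add (integrable_const _) ((hIint j).div_const _), integral_const, integral_div,
      hmean]
    simp [m]
  have hfiber (k : ℕ) : ∫ ω in {ω | N ω = k}, W ω ∂μ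
      = Real.exp (-(2 * C)) * (2 * C) ^ k / k.factorial * m ^ k := by
    have hs : MeasurableSet {ω | N ω = k} := hNmeas (measurableSet_singleton k)
    rw [setIntegral_congr_fun hs fun ω (hω : N ω = k) => (hω ▸ hW ω :),
      setIntegral_prod_range_eq_measureReal_mul_prod hNmeas hImeas hIndep
        (g := fun x => 1 / 2 + x / (2 * C)) (by fun_prop) k,
      measureReal_def, hN k, ENNReal.toReal_ofReal (by positivity)]
    simp only [hfactor, Finset.prod_const, Finset.card_range]
  have hmean_W : ∫ ω, W ω ∂μ = Real.exp (2 * C * (m - 1)) :=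
    (hasSum_setIntegral_fiber hNmeas hWint).unique
      (funext hfiber ▸ hasSum_exp_neg_mul_pow_div_factorial_mul_pow (2 * C) m)
  have hexponent : C + 2 * C * (m - 1) = Real.log r := by
    simp only [m]
    field_simp
    ring
  rw [hmean_W, ← Real.exp_add, hexponent, Real.exp_log hr]

/-- Unbiasedness of the scaled Poisson product estimator: with `L = log r`, `0 < r`,
`|log r| ≤ C`, and `W = ∏_{j < N} (1/2 + Iⱼ/(2C))` for `N ~ Poisson(2C)` independent of
the i.i.d. `Iⱼ` with `|Iⱼ| ≤ C` a.s. and `E[Iⱼ] = log r`, we have `exp C · E[W] = r`. -/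
theorem poisson_product_estimator_unbiased_ratio
    {Ω : Type*} [MeasurableSpace Ω] (μ : Measure Ω) [IsProbabilityMeasure μ]
    (C r : ℝ) (hC : 0 < C) (hr : 0 < r) (hlogr : |Real.log r| ≤ C)
    (I : ℕ → Ω → ℝ) (N : Ω → ℕ)
    (hImeas : ∀ j, Measurable (I j)) (hNmeas : Measurable N)
    -- the `Iⱼ` have a common distribution
    (hIdent : ∀ j, Measure.map (I j) μ = Measure.map (I 0) μ)
    -- the `Iⱼ` and `N` are jointly independent
    (hIndep : iIndepFun
      (fun j : ℕ => Nat.rec (motive := fun _ => Ω → ℝ) (fun ω => (N ω : ℝ)) (fun k _ => I k) j) μ)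
    (hbound : ∀ j, ∀ᵐ ω ∂μ, |I j ω| ≤ C)
    (hmean : ∀ j, ∫ ω, I j ω ∂μ = Real.log r)
    -- `N ~ Poisson(2C)`
    (hN : ∀ k : ℕ, μ {ω | N ω = k} =
      ENNReal.ofReal (Real.exp (-(2 * C)) * (2 * C) ^ k / (Nat.factorial k)))
    (W : Ω → ℝ)
    (hW : ∀ ω, W ω = ∏ j ∈ Finset.range (N ω), (1 / 2 + I j ω / (2 * C))) :
    Real.exp C * ∫ ω, W ω ∂μ = r :=
  poisson_product_estimator_unbiased_ratio_general μ C r hC hr I N hImeas hNmeas hIndep hbound hmean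
    hN W hW
end

section
/- In the two-coin algorithm with per-round reject probability α' = (1 + H e^C)^{-1} and per-round accept probability (1 − α') e^{-C} r, the overall probability of eventually returning ACCEPT equals the Barker acceptance probability Hr/(1 + Hr). -/
/-!
Round `n` accepts after `n` restarts with probability `q ^ n * a`, where `a` and `q` are the
per-round accept and restart probabilities; these events are disjoint, so the overall acceptance
probability is the geometric sum `a / (1 - q) = a / (α' + a)`, and with the given `α'` and `a`
this ratio simplifies to `H r / (1 + H r)`.
-/

open MeasureTheory ProbabilityTheory
open scoped ENNReal

section FirstExit

variable {Ω β : Type*}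

def firstExitInto (X : ℕ → Ω → β) (t s : Set β) (n : ℕ) : Set Ω :=
  {ω | X n ω ∈ s ∧ ∀ m < n, X m ω ∈ t}

variable {X : ℕ → Ω → β} {s t : Set β}

lemma firstExitInto_eq_iInter (n : ℕ) :
    firstExitInto X t s n =
      ⋂ m ∈ Finset.range (n + 1), X m ⁻¹' (if m < n then t else s) := by
  ext ω
  simp only [firstExitInto, Set.mem_ofPred_eq, Set.mem_iInter, Set.mem_preimage,
    Finset.mem_range, Nat.lt_succ_iff]
  constructor
  · rintro ⟨hn, hlt⟩ m hm
    rcases hm.lt_or_eq with hm | rfl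
    · simpa [hm] using hlt m hm
    · simpa using hn
  · intro h
    exact ⟨by simpa using h n le_rfl, fun m hm => by simpa [hm] using h m hm.le⟩

lemma pairwise_disjoint_firstExitInto (hst : Disjoint s t) :
    Pairwise (Function.onFun Disjoint (firstExitInto X t s)) :=
  (pairwise_disjoint_on _).2 fun i _ hij =>
    Set.disjoint_left.2 fun _ hi hj => hst.ne_of_mem hi.1 (hj.2 i hij) rfl

variable [MeasurableSpace Ω] [MeasurableSpace β]

lemma measurableSet_firstExitInto (hX : ∀ n, Measurable (X n)) (hs : MeasurableSet s)
    (ht : MeasurableSet t) (n : ℕ) : MeasurableSet (firstExitInto X t s n) := by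
  rw [firstExitInto_eq_iInter]
  exact .biInter (Set.to_countable _) fun m _ => hX m (by split_ifs <;> assumption)

lemma measure_firstExitInto {μ : Measure Ω} (hind : iIndepFun X μ) (hs : MeasurableSet s)
    (ht : MeasurableSet t) {p q : ℝ≥0∞} (hp : ∀ n, μ (X n ⁻¹' s) = p)
    (hq : ∀ n, μ (X n ⁻¹' t) = q) (n : ℕ) :
    μ (firstExitInto X t s n) = q ^ n * p := by
  rw [firstExitInto_eq_iInter, hind.measure_inter_preimage_eq_mul _
    fun m _ => by split_ifs <;> assumption, Finset.prod_range_succ, if_neg (lt_irrefl n), hp,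
    Finset.prod_congr rfl fun m hm => by rw [if_pos (Finset.mem_range.1 hm), hq],
    Finset.prod_const, Finset.card_range]

theorem measure_exists_firstExitInto {μ : Measure Ω} (hX : ∀ n, Measurable (X n))
    (hind : iIndepFun X μ) (hs : MeasurableSet s) (ht : MeasurableSet t) (hst : Disjoint s t)
    {p q : ℝ≥0∞} (hp : ∀ n, μ (X n ⁻¹' s) = p) (hq : ∀ n, μ (X n ⁻¹' t) = q) :
    μ {ω | ∃ n, X n ω ∈ s ∧ ∀ m < n, X m ω ∈ t} = p / (1 - q) := calc
  _ = ∑' n, q ^ n * p := by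
    rw [Set.ofPred_exists]
    exact (measure_iUnion (pairwise_disjoint_firstExitInto hst)
      (measurableSet_firstExitInto hX hs ht)).trans
      (tsum_congr (measure_firstExitInto hind hs ht hp hq))
  _ = p / (1 - q) := by
    rw [ENNReal.tsum_mul_right, ENNReal.tsum_geometric, ENNReal.div_eq_inv_mul]

end FirstExit

lemma one_sub_measure_eq_two {Ω : Type*} [MeasurableSpace Ω] {μ : Measure Ω}
    [IsProbabilityMeasure μ] {X : Ω → Fin 3} (hX : Measurable X) :
    1 - μ {ω | X ω = 2} = μ {ω | X ω = 0} + μ {ω | X ω = 1} := by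
  have hcompl : {ω | X ω = 2}ᶜ = {ω | X ω = 0} ∪ {ω | X ω = 1} := by
    ext ω
    simp only [Set.mem_compl_iff, Set.mem_union, Set.mem_ofPred_eq]
    generalize X ω = i
    fin_cases i <;> decide
  have h2 : MeasurableSet {ω | X ω = 2} := hX (measurableSet_singleton 2)
  rw [← prob_compl_eq_one_sub h2, hcompl]
  exact measure_union ((Set.disjoint_singleton.2 (by decide)).preimage X)
    (hX (measurableSet_singleton 1))

lemma barker_ratio {H C r α' : ℝ} (hH : 0 ≤ H) (hα' : α' = (1 + H * Real.exp C)⁻¹) :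
    (1 - α') * (Real.exp (-C) * r) / (α' + (1 - α') * (Real.exp (-C) * r)) =
      H * r / (1 + H * r) := by
  have hD : 1 + H * Real.exp C ≠ 0 := by positivity
  have ha : (1 - α') * (Real.exp (-C) * r) = H * r / (1 + H * Real.exp C) := by
    rw [hα', Real.exp_neg]
    field_simp
    ring
  have hsum : α' + H * r / (1 + H * Real.exp C) = (1 + H * r) / (1 + H * Real.exp C) := by
    rw [hα']
    field_simp
  rw [ha, hsum, div_div_div_cancel_right₀ hD]

theorem two_coin_barker_acceptance_probability_general
    {Ω : Type*} [MeasurableSpace Ω] (μ : Measure Ω) [IsProbabilityMeasure μ]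
    (H C r : ℝ) (hH : 0 < H) (hr : 0 < r)
    (α' : ℝ) (hα' : α' = (1 + H * Real.exp C)⁻¹)
    (X : ℕ → Ω → Fin 3) (hXmeas : ∀ n, Measurable (X n))
    (hIndep : iIndepFun X μ)
    (hreject : ∀ n, μ {ω | X n ω = 0} = ENNReal.ofReal α')
    (haccept : ∀ n, μ {ω | X n ω = 1} = ENNReal.ofReal ((1 - α') * (Real.exp (-C) * r))) :
    μ {ω | ∃ n, X n ω = 1 ∧ ∀ m < n, X m ω = 2} =
      ENNReal.ofReal (H * r / (1 + H * r)) := by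
  have hα'_pos : 0 < α' := hα' ▸ by positivity
  have hα'_le : α' ≤ 1 := hα' ▸ inv_le_one_of_one_le₀ (le_add_of_nonneg_right (by positivity))
  have ha : 0 ≤ (1 - α') * (Real.exp (-C) * r) := mul_nonneg (by linarith) (by positivity)
  have hrestart : ∀ n, μ {ω | X n ω = 2} = μ {ω | X 0 ω = 2} := fun n =>
    (ENNReal.sub_right_inj ENNReal.one_ne_top prob_le_one prob_le_one).1 <| by
      rw [one_sub_measure_eq_two (hXmeas n), one_sub_measure_eq_two (hXmeas 0), hreject,
        hreject, haccept, haccept]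
  calc μ {ω | ∃ n, X n ω = 1 ∧ ∀ m < n, X m ω = 2}
      = μ {ω | X 0 ω = 1} / (1 - μ {ω | X 0 ω = 2}) :=
        measure_exists_firstExitInto hXmeas hIndep (measurableSet_singleton 1)
          (measurableSet_singleton 2) (Set.disjoint_singleton.2 (by decide))
          (fun n => (haccept n).trans (haccept 0).symm) hrestart
    _ = ENNReal.ofReal ((1 - α') * (Real.exp (-C) * r) /
          (α' + (1 - α') * (Real.exp (-C) * r))) := by
        rw [one_sub_measure_eq_two (hXmeas 0), hreject, haccept,
          ← ENNReal.ofReal_add hα'_pos.le ha, ENNReal.ofReal_div_of_pos (by positivity)]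
    _ = ENNReal.ofReal (H * r / (1 + H * r)) := by rw [barker_ratio hH.le hα']

/-- The two-coin algorithm returns ACCEPT with the Barker probability `H r / (1 + H r)`.
Each round independently returns REJECT (outcome `0`) with probability
`α' = (1 + H e^C)⁻¹`, ACCEPT (outcome `1`) with probability `(1 - α') e^{-C} r`, and
otherwise RESTART (outcome `2`). The event of eventually accepting is that some round
returns ACCEPT while all previous rounds returned RESTART. -/
theorem two_coin_barker_acceptance_probability
    {Ω : Type*} [MeasurableSpace Ω] (μ : Measure Ω) [IsProbabilityMeasure μ]
    (H C r : ℝ) (hH : 0 < H) (hC : 0 ≤ C) (hr : 0 < r) (hrC : r ≤ Real.exp C)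
    (α' : ℝ) (hα' : α' = (1 + H * Real.exp C)⁻¹)
    (X : ℕ → Ω → Fin 3) (hXmeas : ∀ n, Measurable (X n))
    (hIndep : iIndepFun X μ)
    (hreject : ∀ n, μ {ω | X n ω = 0} = ENNReal.ofReal α')
    (haccept : ∀ n, μ {ω | X n ω = 1} = ENNReal.ofReal ((1 - α') * (Real.exp (-C) * r))) :
    μ {ω | ∃ n, X n ω = 1 ∧ ∀ m < n, X m ω = 2} =
      ENNReal.ofReal (H * r / (1 + H * r)) :=
  two_coin_barker_acceptance_probability_general μ H C r hH hr α' hα' X hXmeas hIndep hreject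
    haccept
end

section
/- In the two-coin algorithm, let N_i be the number of score evaluations in round i, where N_i = 0 if round i returns REJECT (probability α') and N_i ~ Poisson(2C) otherwise. Then E[N₁] = 2C H e^C/(1 + H e^C), and the expected total number of score evaluations before termination equals 2C H e^C/(1 + H r). -/
open MeasureTheory ProbabilityTheory
open scoped ENNReal Nat

/-!
Since `N` vanishes on a reject, `E[N i] = (1 - α') · 2C`: the Poisson mean weighted by the
probability of not rejecting. Round `i` is played exactly when the rounds before it all restarted;
this event depends only on the earlier rounds, hence is independent of round `i`, and has
probability `(1 - p)^i`, where `p = α' + (1 - α') e^{-C} r = (1 + H r) / (1 + H e^C)` is the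
probability that a round ends the algorithm. Summing the geometric series gives
`E[∑_{i<K} N i] = E[N 0] / p` (Wald's identity).
-/

theorem hasSum_mul_poisson (x : ℝ) :
    HasSum (fun k : ℕ => k * (Real.exp (-x) * x ^ k / k !)) x := by
  have hshift : (fun k : ℕ => ((k + 1 : ℕ) : ℝ) * (Real.exp (-x) * x ^ (k + 1) / (k + 1)!)) =
      fun k => Real.exp (-x) * x * (x ^ k / k !) := by
    funext k
    push_cast [Nat.factorial_succ]
    field_simp
    ring
  have hexp := (NormedSpace.expSeries_div_hasSum_exp x).mul_left (Real.exp (-x) * x)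
  rw [← Real.exp_eq_exp_ℝ, mul_right_comm, ← Real.exp_add, neg_add_cancel, Real.exp_zero,
    one_mul, ← hshift] at hexp
  exact (hasSum_nat_add_iff' 1).mp (by simpa using hexp)

section Counts

variable {Ω : Type*} [MeasurableSpace Ω] {μ : Measure Ω}

theorem lintegral_natCast_eq_ofReal_of_hasSum {f : Ω → ℕ} (hf : Measurable f) {p : ℕ → ℝ}
    (hp : ∀ k, 0 ≤ p k) (hfp : ∀ k ≠ 0, μ {ω | f ω = k} = ENNReal.ofReal (p k)) {s : ℝ}
    (hs : HasSum (fun k : ℕ => k * p k) s) :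
    ∫⁻ ω, f ω ∂μ = ENNReal.ofReal s := by
  have hterm : ∀ k : ℕ, (k : ℝ≥0∞) * μ.map f {k} = ENNReal.ofReal (k * p k) := by
    intro k
    rcases eq_or_ne k 0 with rfl | hk
    · simp
    · rw [Measure.map_apply hf (measurableSet_singleton k), ENNReal.ofReal_mul k.cast_nonneg,
        ENNReal.ofReal_natCast]
      exact congrArg _ (hfp k hk)
  rw [← lintegral_map measurable_from_top hf, lintegral_countable', tsum_congr hterm,
    ← ENNReal.ofReal_tsum_of_nonneg (fun k => by have := hp k; positivity) hs.summable,
    hs.tsum_eq]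

theorem lintegral_natCast_eq_ofReal_of_poisson {α : Type*} {X : Ω → α} {a : α} {N : Ω → ℕ}
    (hN : Measurable N) {c x : ℝ} (hc : 0 ≤ c) (hx : 0 ≤ x)
    (hzero : ∀ᵐ ω ∂μ, X ω = a → N ω = 0)
    (hpois : ∀ k : ℕ, μ {ω | X ω ≠ a ∧ N ω = k} =
      ENNReal.ofReal (c * (Real.exp (-x) * x ^ k / k !))) :
    ∫⁻ ω, N ω ∂μ = ENNReal.ofReal (x * c) := by
  refine lintegral_natCast_eq_ofReal_of_hasSum hN
    (p := fun k => c * (Real.exp (-x) * x ^ k / k !)) (fun k => by positivity)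
    (fun k hk => ?_) ?_
  · rw [← hpois k]
    refine measure_congr ?_
    filter_upwards [hzero] with ω hω
    exact propext ⟨fun hNk => ⟨fun ha => hk (hNk ▸ hω ha), hNk⟩, And.right⟩
  · have hfun : (fun k : ℕ => (k : ℝ) * (c * (Real.exp (-x) * x ^ k / k !))) =
        fun k : ℕ => c * (k * (Real.exp (-x) * x ^ k / k !)) :=
      funext fun k => by ring
    rw [hfun, mul_comm x]
    exact (hasSum_mul_poisson x).mul_left c

theorem integral_natCast_eq_toReal_lintegral {f : Ω → ℕ}
    (hf : AEMeasurable (fun ω => (f ω : ℝ≥0∞)) μ) :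
    ∫ ω, (f ω : ℝ) ∂μ = (∫⁻ ω, f ω ∂μ).toReal := by
  simpa using integral_toReal hf (ae_of_all _ fun ω => ENNReal.natCast_lt_top (f ω))

theorem measure_ne_two_eq_add {X : Ω → Fin 3} (hX : Measurable X) :
    μ {ω | X ω ≠ 2} = μ {ω | X ω = 0} + μ {ω | X ω = 1} := by
  have hset : {ω | X ω ≠ 2} = {ω | X ω = 0} ∪ {ω | X ω = 1} := by
    ext ω
    simp only [Set.mem_ofPred_eq, Set.mem_union]
    generalize X ω = x
    fin_cases x <;> decide
  have hdisj : Disjoint {ω | X ω = 0} {ω | X ω = 1} :=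
    Set.disjoint_left.2 fun ω h0 h1 => absurd (h0.symm.trans h1) (by decide)
  rw [hset, measure_union hdisj (hX (measurableSet_singleton 1))]

end Counts

section FirstExit

variable {Ω β : Type*} {Y : ℕ → Ω → β} {S : Set β} {ω : Ω}

/-- The index of the first round whose outcome leaves `S`; it is the junk value `0` when every
outcome stays in `S`. -/
noncomputable def firstExit (Y : ℕ → Ω → β) (S : Set β) (ω : Ω) : ℕ := sInf {n | Y n ω ∉ S}

theorem lt_firstExit_add_one_iff (h : ∃ n, Y n ω ∉ S) {i : ℕ} :
    i < firstExit Y S ω + 1 ↔ ∀ j < i, Y j ω ∈ S := by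
  rw [Nat.lt_succ_iff, firstExit]
  constructor
  · intro hi j hj
    by_contra hjS
    exact absurd (Nat.sInf_le (show j ∈ {n | Y n ω ∉ S} from hjS)) (by omega)
  · intro hi
    by_contra! hlt
    exact Nat.sInf_mem h (hi _ hlt)

theorem tsum_indicator_forall_lt_mem_eq_sum_range_firstExit (h : ∃ n, Y n ω ∉ S)
    (g : β → ℝ≥0∞) :
    ∑' i, {ω | ∀ j < i, Y j ω ∈ S}.indicator (fun ω => g (Y i ω)) ω =
      ∑ i ∈ Finset.range (firstExit Y S ω + 1), g (Y i ω) := by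
  have hsupp : ∀ i ∉ Finset.range (firstExit Y S ω + 1),
      {ω | ∀ j < i, Y j ω ∈ S}.indicator (fun ω => g (Y i ω)) ω = 0 := fun i hi =>
    Set.indicator_of_notMem (fun (hω : ∀ j < i, Y j ω ∈ S) =>
      hi (Finset.mem_range.2 ((lt_firstExit_add_one_iff h).2 hω))) _
  rw [tsum_eq_sum hsupp]
  refine Finset.sum_congr rfl fun i hi => Set.indicator_of_mem ?_ _
  exact (lt_firstExit_add_one_iff h).1 (Finset.mem_range.1 hi)

theorem indicator_forall_lt_mem_eq_prod_mul (g : β → ℝ≥0∞) (i : ℕ) :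
    {ω | ∀ j < i, Y j ω ∈ S}.indicator (fun ω => g (Y i ω)) ω =
      (∏ j ∈ Finset.range i, S.indicator 1 (Y j ω)) * g (Y i ω) := by
  by_cases hω : ∀ j < i, Y j ω ∈ S
  · rw [Set.indicator_of_mem (s := {ω | ∀ j < i, Y j ω ∈ S}) hω, Finset.prod_eq_one fun j hj =>
      Set.indicator_of_mem (hω j (Finset.mem_range.1 hj)) _, one_mul]
  · obtain ⟨j, hj, hjS⟩ := not_forall₂.1 hω
    rw [Set.indicator_of_notMem (s := {ω | ∀ j < i, Y j ω ∈ S}) hω,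
      Finset.prod_eq_zero (Finset.mem_range.2 hj) (Set.indicator_of_notMem hjS _), zero_mul]

end FirstExit

section Wald

variable {Ω β : Type*} [MeasurableSpace Ω] [MeasurableSpace β] {μ : Measure Ω}
  {Y : ℕ → Ω → β} {S : Set β}

theorem lintegral_indicator_forall_lt_mem (hY : iIndepFun Y μ) (hYm : ∀ j, Measurable (Y j))
    (hS : MeasurableSet S) {g : β → ℝ≥0∞} (hg : Measurable g) (i : ℕ) :
    ∫⁻ ω, {ω | ∀ j < i, Y j ω ∈ S}.indicator (fun ω => g (Y i ω)) ω ∂μ =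
      (∏ j ∈ Finset.range i, μ (Y j ⁻¹' S)) * ∫⁻ ω, g (Y i ω) ∂μ := by
  -- rounds before `i` contribute the factor `1_S`, round `i` the factor `g`
  let factor : ℕ → β → ℝ≥0∞ := fun j => if j < i then S.indicator 1 else g
  have hfactor : ∀ j, Measurable (factor j) := fun j => by
    by_cases hj : j < i
    · simpa [factor, hj] using measurable_one.indicator hS
    · simpa [factor, hj] using hg
  have hprod : ∀ ω, {ω | ∀ j < i, Y j ω ∈ S}.indicator (fun ω => g (Y i ω)) ω =
      ∏ j ∈ Finset.range (i + 1), factor j (Y j ω) := fun ω => by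
    rw [indicator_forall_lt_mem_eq_prod_mul, Finset.prod_range_succ]
    congr 1
    · exact Finset.prod_congr rfl fun j hj => by simp [factor, Finset.mem_range.1 hj]
    · simp [factor]
  refine (lintegral_congr hprod).trans ((lintegral_prod_eq_prod_lintegral_of_indepFun _
    (fun j => factor j ∘ Y j) (hY.comp factor hfactor)
    fun j => (hfactor j).comp (hYm j)).trans ?_)
  rw [Finset.prod_range_succ]
  congr 1
  · refine Finset.prod_congr rfl fun j hj => ?_
    rw [← lintegral_indicator_one (hYm j hS)]
    simp only [factor, Finset.mem_range.1 hj, if_true, Function.comp_apply]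
    rfl
  · simp [factor]

theorem measurableSet_forall_lt_mem (hYm : ∀ j, Measurable (Y j)) (hS : MeasurableSet S)
    (i : ℕ) : MeasurableSet {ω | ∀ j < i, Y j ω ∈ S} := by
  simp only [Set.ofPred_forall]
  exact MeasurableSet.iInter fun j => MeasurableSet.iInter fun _ => hYm j hS

theorem measure_forall_lt_mem (hY : iIndepFun Y μ) (hS : MeasurableSet S) (i : ℕ) :
    μ {ω | ∀ j < i, Y j ω ∈ S} = ∏ j ∈ Finset.range i, μ (Y j ⁻¹' S) := by
  convert hY.measure_inter_preimage_eq_mul (Finset.range i) (sets := fun _ => S)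
    (fun _ _ => hS) using 2
  ext ω
  simp

theorem measure_preimage_eq_one_sub [IsProbabilityMeasure μ] (hYm : ∀ j, Measurable (Y j))
    (hS : MeasurableSet S) {p : ℝ≥0∞} (hp : ∀ j, μ {ω | Y j ω ∉ S} = p) (j : ℕ) :
    μ (Y j ⁻¹' S) = 1 - p := by
  rw [← hp j, ← compl_compl (Y j ⁻¹' S), prob_compl_eq_one_sub (hYm j hS).compl]
  rfl

theorem ae_exists_not_mem (hY : iIndepFun Y μ) (hYm : ∀ j, Measurable (Y j))
    (hS : MeasurableSet S) {p : ℝ≥0∞} (hp : ∀ j, μ {ω | Y j ω ∉ S} = p) (hp0 : p ≠ 0) :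
    ∀ᵐ ω ∂μ, ∃ n, Y n ω ∉ S := by
  have := hY.isProbabilityMeasure
  have hq : 1 - p < 1 := ENNReal.sub_lt_self ENNReal.one_ne_top one_ne_zero hp0
  have hle : ∀ i, μ {ω | ∀ n, Y n ω ∈ S} ≤ (1 - p) ^ i := fun i =>
    calc μ {ω | ∀ n, Y n ω ∈ S} ≤ μ {ω | ∀ j < i, Y j ω ∈ S} :=
          measure_mono fun ω h j _ => h j
      _ = (1 - p) ^ i := by
          simp [measure_forall_lt_mem hY hS, measure_preimage_eq_one_sub hYm hS hp]
  rw [ae_iff]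
  push Not
  exact le_antisymm (ge_of_tendsto' (ENNReal.tendsto_pow_atTop_nhds_zero_of_lt_one hq) hle)
    zero_le

theorem sum_range_firstExit_ae_eq_tsum (hY : iIndepFun Y μ) (hYm : ∀ j, Measurable (Y j))
    (hS : MeasurableSet S) {p : ℝ≥0∞} (hp : ∀ j, μ {ω | Y j ω ∉ S} = p) (hp0 : p ≠ 0)
    (g : β → ℝ≥0∞) :
    (fun ω => ∑ i ∈ Finset.range (firstExit Y S ω + 1), g (Y i ω)) =ᵐ[μ]
      fun ω => ∑' i, {ω | ∀ j < i, Y j ω ∈ S}.indicator (fun ω => g (Y i ω)) ω :=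
  (ae_exists_not_mem hY hYm hS hp hp0).mono fun _ h =>
    (tsum_indicator_forall_lt_mem_eq_sum_range_firstExit h g).symm

theorem aemeasurable_sum_range_firstExit (hY : iIndepFun Y μ) (hYm : ∀ j, Measurable (Y j))
    (hS : MeasurableSet S) {p : ℝ≥0∞} (hp : ∀ j, μ {ω | Y j ω ∉ S} = p) (hp0 : p ≠ 0)
    {g : β → ℝ≥0∞} (hg : Measurable g) :
    AEMeasurable (fun ω => ∑ i ∈ Finset.range (firstExit Y S ω + 1), g (Y i ω)) μ :=
  (Measurable.tsum fun i => (hg.comp (hYm i)).indicator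
    (measurableSet_forall_lt_mem hYm hS i)).aemeasurable.congr
    (sum_range_firstExit_ae_eq_tsum hY hYm hS hp hp0 g).symm

/-- Wald's identity for the first exit from `S`, a geometric stopping time with success
probability `p`. -/
theorem lintegral_sum_range_firstExit (hY : iIndepFun Y μ) (hYm : ∀ j, Measurable (Y j))
    (hS : MeasurableSet S) {p : ℝ≥0∞} (hp : ∀ j, μ {ω | Y j ω ∉ S} = p) (hp0 : p ≠ 0)
    {g : β → ℝ≥0∞} (hg : Measurable g) {m : ℝ≥0∞} (hm : ∀ i, ∫⁻ ω, g (Y i ω) ∂μ = m) :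
    ∫⁻ ω, ∑ i ∈ Finset.range (firstExit Y S ω + 1), g (Y i ω) ∂μ = p⁻¹ * m := by
  have := hY.isProbabilityMeasure
  have hp1 : p ≤ 1 := hp 0 ▸ prob_le_one
  calc ∫⁻ ω, ∑ i ∈ Finset.range (firstExit Y S ω + 1), g (Y i ω) ∂μ
      = ∫⁻ ω, ∑' i, {ω | ∀ j < i, Y j ω ∈ S}.indicator (fun ω => g (Y i ω)) ω ∂μ :=
        lintegral_congr_ae (sum_range_firstExit_ae_eq_tsum hY hYm hS hp hp0 g)
    _ = ∑' i, ∫⁻ ω, {ω | ∀ j < i, Y j ω ∈ S}.indicator (fun ω => g (Y i ω)) ω ∂μ :=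
        lintegral_tsum fun i => ((hg.comp (hYm i)).indicator
          (measurableSet_forall_lt_mem hYm hS i)).aemeasurable
    _ = ∑' i, (1 - p) ^ i * m := by
        simp [lintegral_indicator_forall_lt_mem hY hYm hS hg,
          measure_preimage_eq_one_sub hYm hS hp, hm]
    _ = p⁻¹ * m := by
        rw [ENNReal.tsum_mul_right, ENNReal.tsum_geometric,
          ENNReal.sub_sub_cancel ENNReal.one_ne_top hp1]

theorem integral_sum_range_firstExit (hY : iIndepFun Y μ) (hYm : ∀ j, Measurable (Y j))
    (hS : MeasurableSet S) {p : ℝ} (hp : ∀ j, μ {ω | Y j ω ∉ S} = ENNReal.ofReal p)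
    (hp0 : 0 < p) {g : β → ℕ} (hg : Measurable g) {m : ℝ} (hm0 : 0 ≤ m)
    (hm : ∀ i, ∫⁻ ω, g (Y i ω) ∂μ = ENNReal.ofReal m) :
    ∫ ω, ∑ i ∈ Finset.range (firstExit Y S ω + 1), (g (Y i ω) : ℝ) ∂μ = m / p := by
  have hp0' : ENNReal.ofReal p ≠ 0 := (ENNReal.ofReal_pos.2 hp0).ne'
  have hg' : Measurable fun b => (g b : ℝ≥0∞) := measurable_from_top.comp hg
  have hmeas := aemeasurable_sum_range_firstExit hY hYm hS hp hp0' hg'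
  have hlint := lintegral_sum_range_firstExit hY hYm hS hp hp0' hg' hm
  simp only [← Nat.cast_sum] at hmeas hlint ⊢
  rw [integral_natCast_eq_toReal_lintegral hmeas, hlint, ENNReal.toReal_mul, ENNReal.toReal_inv,
    ENNReal.toReal_ofReal hp0.le, ENNReal.toReal_ofReal hm0, div_eq_inv_mul]

end Wald

theorem two_coin_expected_score_queries_general
    {Ω : Type*} [MeasurableSpace Ω] (μ : Measure Ω) [IsProbabilityMeasure μ]
    (H C r : ℝ) (hH : 0 < H) (hC : 0 ≤ C) (hr : 0 < r)
    (α' : ℝ) (hα' : α' = (1 + H * Real.exp C)⁻¹)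
    (X : ℕ → Ω → Fin 3) (N : ℕ → Ω → ℕ)
    (hXmeas : ∀ i, Measurable (X i)) (hNmeas : ∀ i, Measurable (N i))
    -- the rounds `(X i, N i)` are jointly independent
    (hIndep : iIndepFun (fun i ω => (X i ω, N i ω)) μ)
    (hreject : ∀ i, μ {ω | X i ω = 0} = ENNReal.ofReal α')
    (haccept : ∀ i, μ {ω | X i ω = 1} = ENNReal.ofReal ((1 - α') * (Real.exp (-C) * r)))
    -- no score evaluations on an immediate reject
    (hNreject : ∀ i, ∀ᵐ ω ∂μ, X i ω = 0 → N i ω = 0)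
    -- otherwise the number of score evaluations is Poisson(2C)
    (hNpois : ∀ i, ∀ k : ℕ, μ {ω | X i ω ≠ 0 ∧ N i ω = k} =
      ENNReal.ofReal ((1 - α') *
        (Real.exp (-(2 * C)) * (2 * C) ^ k / (Nat.factorial k))))
    (K : Ω → ℕ) (hK : ∀ ω, K ω = sInf {n | X n ω ≠ 2} + 1) :
    (∫ ω, (N 0 ω : ℝ) ∂μ = 2 * C * H * Real.exp C / (1 + H * Real.exp C)) ∧
    (∫ ω, (∑ i ∈ Finset.range (K ω), (N i ω : ℝ)) ∂μ =
      2 * C * H * Real.exp C / (1 + H * r)) := by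
  subst hα'
  have hα0 : 0 < (1 + H * Real.exp C)⁻¹ := by positivity
  have h1α : 0 ≤ 1 - (1 + H * Real.exp C)⁻¹ :=
    sub_nonneg.2 (inv_le_one_of_one_le₀ (by nlinarith [Real.exp_pos C]))
  have hmean : ∀ i, ∫⁻ ω, (N i ω : ℝ≥0∞) ∂μ =
      ENNReal.ofReal (2 * C * (1 - (1 + H * Real.exp C)⁻¹)) := fun i =>
    lintegral_natCast_eq_ofReal_of_poisson (hNmeas i) h1α (by positivity) (hNreject i) (hNpois i)
  have hstop : ∀ j, μ {ω | (X j ω, N j ω) ∉ Prod.fst ⁻¹' {(2 : Fin 3)}} = ENNReal.ofReal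
      ((1 + H * Real.exp C)⁻¹ + (1 - (1 + H * Real.exp C)⁻¹) * (Real.exp (-C) * r)) := fun j => by
    rw [ENNReal.ofReal_add hα0.le (by positivity), ← hreject j, ← haccept j]
    exact measure_ne_two_eq_add (hXmeas j)
  constructor
  · rw [integral_natCast_eq_toReal_lintegral (measurable_from_top.comp (hNmeas 0)).aemeasurable,
      hmean 0, ENNReal.toReal_ofReal (by positivity)]
    field_simp
    ring
  · have hsum : ∀ ω, ∑ i ∈ Finset.range (K ω), (N i ω : ℝ) = ∑ i ∈ Finset.range
        (firstExit (fun i ω => (X i ω, N i ω)) (Prod.fst ⁻¹' {2}) ω + 1), (N i ω : ℝ) :=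
      fun ω => by rw [hK]; rfl
    rw [integral_congr_ae (ae_of_all _ hsum), integral_sum_range_firstExit (g := Prod.snd) hIndep
      (fun j => (hXmeas j).prodMk (hNmeas j)) (measurable_fst (measurableSet_singleton 2)) hstop
      (by positivity) measurable_snd (by positivity) hmean, Real.exp_neg]
    have hden : Real.exp C + (1 + H * Real.exp C - 1) * r = Real.exp C * (1 + H * r) := by ring
    field_simp
    rw [hden]
    field_simp
    ring

/-- Expected number of score queries of the two-coin algorithm. In round `i` the outcome
`X i` is REJECT (`0`) with probability `α' = (1 + H e^C)⁻¹`, ACCEPT (`1`) with probability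
`(1 - α') e^{-C} r`, RESTART (`2`) otherwise; the number of score evaluations `N i` is `0`
on a reject and is `Poisson(2C)`-distributed on the complement; rounds are i.i.d. Then
`E[N₁] = 2C H e^C / (1 + H e^C)`, and the expected total number of score evaluations up to
the termination round `K` equals `2C H e^C / (1 + H r)`. -/
theorem two_coin_expected_score_queries
    {Ω : Type*} [MeasurableSpace Ω] (μ : Measure Ω) [IsProbabilityMeasure μ]
    (H C r : ℝ) (hH : 0 < H) (hC : 0 ≤ C) (hr : 0 < r) (hrC : r ≤ Real.exp C)
    (α' : ℝ) (hα' : α' = (1 + H * Real.exp C)⁻¹)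
    (X : ℕ → Ω → Fin 3) (N : ℕ → Ω → ℕ)
    (hXmeas : ∀ i, Measurable (X i)) (hNmeas : ∀ i, Measurable (N i))
    -- the rounds `(X i, N i)` are jointly independent
    (hIndep : iIndepFun (fun i ω => (X i ω, N i ω)) μ)
    -- and identically distributed
    (hIdent : ∀ i, Measure.map (fun ω => (X i ω, N i ω)) μ =
      Measure.map (fun ω => (X 0 ω, N 0 ω)) μ)
    (hreject : ∀ i, μ {ω | X i ω = 0} = ENNReal.ofReal α')
    (haccept : ∀ i, μ {ω | X i ω = 1} = ENNReal.ofReal ((1 - α') * (Real.exp (-C) * r)))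
    -- no score evaluations on an immediate reject
    (hNreject : ∀ i, ∀ᵐ ω ∂μ, X i ω = 0 → N i ω = 0)
    -- otherwise the number of score evaluations is Poisson(2C)
    (hNpois : ∀ i, ∀ k : ℕ, μ {ω | X i ω ≠ 0 ∧ N i ω = k} =
      ENNReal.ofReal ((1 - α') *
        (Real.exp (-(2 * C)) * (2 * C) ^ k / (Nat.factorial k))))
    (K : Ω → ℕ) (hK : ∀ ω, K ω = sInf {n | X n ω ≠ 2} + 1) :
    (∫ ω, (N 0 ω : ℝ) ∂μ = 2 * C * H * Real.exp C / (1 + H * Real.exp C)) ∧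
    (∫ ω, (∑ i ∈ Finset.range (K ω), (N i ω : ℝ)) ∂μ =
      2 * C * H * Real.exp C / (1 + H * r)) :=
  two_coin_expected_score_queries_general μ H C r hH hC hr α' hα' X N hXmeas hNmeas hIndep hreject
    haccept hNreject hNpois K hK
end

section
/- Let f : [0,1] → ℝ be four times continuously differentiable. Then the Simpson's 1/3 rule error satisfies ∫₀¹ f(u) du − (1/6)(f(0) + 4 f(1/2) + f(1)) = −f⁗(u*)/2880 for some u* ∈ [0,1]. -/
/-!
Let `F(h) = ∫_{m-h}^{m+h} f - (h/3)(f(m-h) + 4f(m) + f(m+h))` be the Simpson defect on the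
symmetric interval of half-width `h`. Then `F`, `F'`, `F''` vanish at `0` and
`F'''(h) = -(h/3)(f'''(m+h) - f'''(m-h))`. Comparing `F` with `h ^ 5` by three successive
Cauchy mean value steps gives `F(r) = -(r^5/90) (f'''(m+c) - f'''(m-c)) / (2c)` for some
`0 < c < r`, and the mean value theorem for `f'''` on `[m-c, m+c]` turns this difference
quotient into `f⁗(ξ)`. With `m = r = 1/2` the constant is `1/(32 · 90) = 1/2880`.
-/

open intervalIntegral Set Topology

theorem ContDiffOn.hasDerivAt_iteratedDerivWithin {𝕜 F : Type*} [NontriviallyNormedField 𝕜]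
    [NormedAddCommGroup F] [NormedSpace 𝕜 F] {f : 𝕜 → F} {s : Set 𝕜} {n : WithTop ℕ∞} {k : ℕ}
    {x : 𝕜} (hf : ContDiffOn 𝕜 n f s) (hk : k < n) (hs : UniqueDiffOn 𝕜 s) (hx : s ∈ 𝓝 x) :
    HasDerivAt (iteratedDerivWithin k f s) (iteratedDerivWithin (k + 1) f s x) x := by
  rw [iteratedDerivWithin_succ]
  exact ((hf.differentiableOn_iteratedDerivWithin hk hs) x (mem_of_mem_nhds hx)).hasDerivWithinAt
    |>.hasDerivAt hx

theorem exists_pow_mul_eq_of_hasDerivAt {F F' : ℝ → ℝ} {b : ℝ} (n : ℕ) (hb : 0 < b)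
    (hFc : ContinuousOn F (Icc 0 b)) (hF : ∀ x ∈ Ioo 0 b, HasDerivAt F (F' x) x)
    (hF0 : F 0 = 0) :
    ∃ c ∈ Ioo 0 b, (n + 1) * c ^ n * F b = b ^ (n + 1) * F' c := by
  obtain ⟨c, hc, h⟩ := exists_ratio_hasDerivAt_eq_ratio_slope F F' hb hFc hF (· ^ (n + 1))
    (fun x => (n + 1) * x ^ n) (by fun_prop) fun x _ => by simpa using hasDerivAt_pow (n + 1) x
  refine ⟨c, hc, ?_⟩
  simp only [hF0, sub_zero, zero_pow n.succ_ne_zero] at h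
  linarith

theorem exists_pow_mul_eq_of_hasDerivAt₃ {F F₁ F₂ F₃ : ℝ → ℝ} {b : ℝ} (n : ℕ) (hb : 0 < b)
    (hFc : ContinuousOn F (Icc 0 b)) (hF₁c : ContinuousOn F₁ (Icc 0 b))
    (hF₂c : ContinuousOn F₂ (Icc 0 b))
    (hF : ∀ x ∈ Ioo 0 b, HasDerivAt F (F₁ x) x) (hF₁ : ∀ x ∈ Ioo 0 b, HasDerivAt F₁ (F₂ x) x)
    (hF₂ : ∀ x ∈ Ioo 0 b, HasDerivAt F₂ (F₃ x) x)
    (hF0 : F 0 = 0) (hF₁0 : F₁ 0 = 0) (hF₂0 : F₂ 0 = 0) :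
    ∃ c ∈ Ioo 0 b, (n + 3) * (n + 2) * (n + 1) * c ^ n * F b = b ^ (n + 3) * F₃ c := by
  obtain ⟨c₁, hc₁, e₁⟩ := exists_pow_mul_eq_of_hasDerivAt (n + 2) hb hFc hF hF0
  obtain ⟨c₂, hc₂, e₂⟩ := exists_pow_mul_eq_of_hasDerivAt (n + 1) hc₁.1
    (hF₁c.mono (Icc_subset_Icc_right hc₁.2.le)) (fun x hx => hF₁ x ⟨hx.1, hx.2.trans hc₁.2⟩) hF₁0
  have hc₂b : c₂ < b := hc₂.2.trans hc₁.2
  obtain ⟨c₃, hc₃, e₃⟩ := exists_pow_mul_eq_of_hasDerivAt n hc₂.1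
    (hF₂c.mono (Icc_subset_Icc_right hc₂b.le)) (fun x hx => hF₂ x ⟨hx.1, hx.2.trans hc₂b⟩) hF₂0
  refine ⟨c₃, ⟨hc₃.1, hc₃.2.trans hc₂b⟩, ?_⟩
  have hc₁0 := hc₁.1
  have hc₂0 := hc₂.1
  push_cast at e₁ e₂ e₃
  apply mul_left_cancel₀ (show c₁ ^ (n + 2) * c₂ ^ (n + 1) ≠ 0 by positivity)
  linear_combination (n + 2) * (n + 1) * c₂ ^ (n + 1) * c₃ ^ n * e₁
    + (n + 1) * b ^ (n + 3) * c₃ ^ n * e₂ + b ^ (n + 3) * c₁ ^ (n + 2) * e₃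

section Symmetric

variable {u u' : ℝ → ℝ} {m r t : ℝ}

theorem add_mem_Icc_and_sub_mem_Icc (ht : t ∈ Icc 0 r) :
    m + t ∈ Icc (m - r) (m + r) ∧ m - t ∈ Icc (m - r) (m + r) := by
  obtain ⟨h0, hr⟩ := ht
  exact ⟨⟨by linarith, by linarith⟩, ⟨by linarith, by linarith⟩⟩

theorem add_mem_Ioo_and_sub_mem_Ioo (ht : t ∈ Ioo 0 r) :
    m + t ∈ Ioo (m - r) (m + r) ∧ m - t ∈ Ioo (m - r) (m + r) := by
  obtain ⟨h0, hr⟩ := ht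
  exact ⟨⟨by linarith, by linarith⟩, ⟨by linarith, by linarith⟩⟩

theorem ContinuousOn.comp_add_add_comp_sub (hu : ContinuousOn u (Icc (m - r) (m + r))) :
    ContinuousOn (fun t => u (m + t) + u (m - t)) (Icc 0 r) :=
  (hu.comp (by fun_prop) fun _ ht => (add_mem_Icc_and_sub_mem_Icc ht).1).add
    (hu.comp (by fun_prop) fun _ ht => (add_mem_Icc_and_sub_mem_Icc ht).2)

theorem ContinuousOn.comp_add_sub_comp_sub (hu : ContinuousOn u (Icc (m - r) (m + r))) :
    ContinuousOn (fun t => u (m + t) - u (m - t)) (Icc 0 r) :=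
  (hu.comp (by fun_prop) fun _ ht => (add_mem_Icc_and_sub_mem_Icc ht).1).sub
    (hu.comp (by fun_prop) fun _ ht => (add_mem_Icc_and_sub_mem_Icc ht).2)

theorem hasDerivAt_comp_add_add_comp_sub (hu : ∀ x ∈ Ioo (m - r) (m + r), HasDerivAt u (u' x) x)
    (ht : t ∈ Ioo 0 r) :
    HasDerivAt (fun s => u (m + s) + u (m - s)) (u' (m + t) - u' (m - t)) t :=
  ((hu _ (add_mem_Ioo_and_sub_mem_Ioo ht).1).comp_const_add m t).add
    ((hu _ (add_mem_Ioo_and_sub_mem_Ioo ht).2).comp_const_sub m t)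

theorem hasDerivAt_comp_add_sub_comp_sub (hu : ∀ x ∈ Ioo (m - r) (m + r), HasDerivAt u (u' x) x)
    (ht : t ∈ Ioo 0 r) :
    HasDerivAt (fun s => u (m + s) - u (m - s)) (u' (m + t) + u' (m - t)) t :=
  sub_neg_eq_add (u' (m + t)) _ ▸
    ((hu _ (add_mem_Ioo_and_sub_mem_Ioo ht).1).comp_const_add m t).sub
      ((hu _ (add_mem_Ioo_and_sub_mem_Ioo ht).2).comp_const_sub m t)

end Symmetric

section Simpson

variable {Φ : ℝ → ℝ} {g : ℕ → ℝ → ℝ} {m r : ℝ}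

theorem exists_simpson_defect_eq_slope (hr : 0 < r)
    (hΦc : ContinuousOn Φ (Icc (m - r) (m + r)))
    (hΦ : ∀ x ∈ Ioo (m - r) (m + r), HasDerivAt Φ (g 0 x) x)
    (hgc : ∀ k < 3, ContinuousOn (g k) (Icc (m - r) (m + r)))
    (hg : ∀ k < 3, ∀ x ∈ Ioo (m - r) (m + r), HasDerivAt (g k) (g (k + 1) x) x) :
    ∃ c ∈ Ioo 0 r, Φ (m + r) - Φ (m - r) - r / 3 * (g 0 (m - r) + 4 * g 0 m + g 0 (m + r)) =
      -(r ^ 5 / 90 * ((g 3 (m + c) - g 3 (m - c)) / (2 * c))) := by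
  set F : ℝ → ℝ := fun t => Φ (m + t) - Φ (m - t) - t / 3 * (g 0 (m + t) + g 0 (m - t) + 4 * g 0 m)
  set F₁ : ℝ → ℝ := fun t => 2 / 3 * (g 0 (m + t) + g 0 (m - t)) - 4 / 3 * g 0 m
    - t / 3 * (g 1 (m + t) - g 1 (m - t))
  set F₂ : ℝ → ℝ := fun t => 1 / 3 * (g 1 (m + t) - g 1 (m - t))
    - t / 3 * (g 2 (m + t) + g 2 (m - t))
  have hid : ContinuousOn (fun t : ℝ => t / 3) (Icc 0 r) := by fun_prop
  have hid' (t : ℝ) : HasDerivAt (fun t : ℝ => t / 3) (1 / 3) t := by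
    simpa using (hasDerivAt_id t).div_const 3
  have hFc : ContinuousOn F (Icc 0 r) := hΦc.comp_add_sub_comp_sub.sub
    (hid.mul ((hgc 0 (by norm_num)).comp_add_add_comp_sub.add continuousOn_const))
  have hF₁c : ContinuousOn F₁ (Icc 0 r) :=
    ((continuousOn_const.mul (hgc 0 (by norm_num)).comp_add_add_comp_sub).sub
      continuousOn_const).sub (hid.mul (hgc 1 (by norm_num)).comp_add_sub_comp_sub)
  have hF₂c : ContinuousOn F₂ (Icc 0 r) :=
    (continuousOn_const.mul (hgc 1 (by norm_num)).comp_add_sub_comp_sub).sub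
      (hid.mul (hgc 2 (by norm_num)).comp_add_add_comp_sub)
  have hF : ∀ t ∈ Ioo 0 r, HasDerivAt F (F₁ t) t := fun t ht =>
    ((hasDerivAt_comp_add_sub_comp_sub hΦ ht).sub ((hid' t).mul
      ((hasDerivAt_comp_add_add_comp_sub (hg 0 (by norm_num)) ht).add_const _))).congr_deriv
        (by ring)
  have hF₁ : ∀ t ∈ Ioo 0 r, HasDerivAt F₁ (F₂ t) t := fun t ht =>
    ((((hasDerivAt_comp_add_add_comp_sub (hg 0 (by norm_num)) ht).const_mul _).sub_const
      _).sub ((hid' t).mul (hasDerivAt_comp_add_sub_comp_sub (hg 1 (by norm_num)) ht))).congr_deriv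
        (by ring)
  have hF₂ : ∀ t ∈ Ioo 0 r,
      HasDerivAt F₂ (-(t / 3 * (g 3 (m + t) - g 3 (m - t)))) t := fun t ht =>
    (((hasDerivAt_comp_add_sub_comp_sub (hg 1 (by norm_num)) ht).const_mul _).sub
      ((hid' t).mul (hasDerivAt_comp_add_add_comp_sub (hg 2 (by norm_num)) ht))).congr_deriv
        (by ring)
  obtain ⟨c, hc, hcF⟩ := exists_pow_mul_eq_of_hasDerivAt₃ 2 hr hFc hF₁c hF₂c hF hF₁ hF₂
    (by simp [F]) (by norm_num [F₁]; ring) (by simp [F₂])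
  refine ⟨c, hc, ?_⟩
  have hc0 : c ≠ 0 := hc.1.ne'
  norm_num [F] at hcF
  field_simp
  apply mul_left_cancel₀ hc0
  linear_combination 9 * hcF

theorem exists_simpson_defect_eq (hr : 0 < r)
    (hΦc : ContinuousOn Φ (Icc (m - r) (m + r)))
    (hΦ : ∀ x ∈ Ioo (m - r) (m + r), HasDerivAt Φ (g 0 x) x)
    (hgc : ∀ k < 3, ContinuousOn (g k) (Icc (m - r) (m + r)))
    (hg : ∀ k < 4, ∀ x ∈ Ioo (m - r) (m + r), HasDerivAt (g k) (g (k + 1) x) x) :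
    ∃ ξ ∈ Ioo (m - r) (m + r),
      Φ (m + r) - Φ (m - r) - r / 3 * (g 0 (m - r) + 4 * g 0 m + g 0 (m + r)) =
        -(r ^ 5 / 90 * g 4 ξ) := by
  obtain ⟨c, hc, hF⟩ := exists_simpson_defect_eq_slope hr hΦc hΦ hgc
    fun k hk => hg k (hk.trans (by norm_num))
  have hsub : Icc (m - c) (m + c) ⊆ Ioo (m - r) (m + r) :=
    Icc_subset_Ioo (add_mem_Ioo_and_sub_mem_Ioo hc).2.1 (add_mem_Ioo_and_sub_mem_Ioo hc).1.2
  obtain ⟨ξ, hξ, hξg⟩ := exists_hasDerivAt_eq_slope (g 3) (g 4) (by linarith [hc.1])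
    (fun x hx => (hg 3 (by norm_num) x (hsub hx)).continuousAt.continuousWithinAt)
    (fun x hx => hg 3 (by norm_num) x (hsub (Ioo_subset_Icc_self hx)))
  refine ⟨ξ, hsub (Ioo_subset_Icc_self hξ), ?_⟩
  rwa [hξg, show m + c - (m - c) = 2 * c by ring]

theorem exists_integral_sub_simpson_eq (hr : 0 < r)
    (hgc : ∀ k < 3, ContinuousOn (g k) (Icc (m - r) (m + r)))
    (hg : ∀ k < 4, ∀ x ∈ Ioo (m - r) (m + r), HasDerivAt (g k) (g (k + 1) x) x) :
    ∃ ξ ∈ Ioo (m - r) (m + r),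
      (∫ x in (m - r)..(m + r), g 0 x) - r / 3 * (g 0 (m - r) + 4 * g 0 m + g 0 (m + r)) =
        -(r ^ 5 / 90 * g 4 ξ) := by
  have hab : m - r ≤ m + r := by linarith
  have hg₀ := hgc 0 (by norm_num)
  have hΦc : ContinuousOn (fun x => ∫ t in (m - r)..x, g 0 t) (Icc (m - r) (m + r)) := by
    simpa [uIcc_of_le hab] using
      continuousOn_primitive_interval' (hg₀.intervalIntegrable_of_Icc hab) left_mem_uIcc
  obtain ⟨ξ, hξ, h⟩ := exists_simpson_defect_eq hr hΦc
    (fun x hx => integral_hasDerivAt_right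
      ((hg₀.mono (Icc_subset_Icc_right hx.2.le)).intervalIntegrable_of_Icc hx.1.le)
      ((hg₀.mono Ioo_subset_Icc_self).stronglyMeasurableAtFilter isOpen_Ioo x hx)
      (hg 0 (by norm_num) x hx).continuousAt)
    hgc hg
  exact ⟨ξ, hξ, by simpa using h⟩

end Simpson

/-- Simpson's 1/3 rule error on `[0,1]`: if `f` is four times continuously differentiable
on `[0,1]`, then there exists `u* ∈ [0,1]` with
`∫₀¹ f - (1/6)(f 0 + 4 f (1/2) + f 1) = - f⁗(u*) / 2880`. -/
theorem simpsons_rule_error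
    (f : ℝ → ℝ) (hf : ContDiffOn ℝ 4 f (Set.Icc 0 1)) :
    ∃ u' ∈ Set.Icc (0:ℝ) 1,
      (∫ u in (0:ℝ)..1, f u) - (1 / 6) * (f 0 + 4 * f (1 / 2) + f 1) =
        -(iteratedDerivWithin 4 f (Set.Icc 0 1) u') / 2880 := by
  have hs : UniqueDiffOn ℝ (Icc (0 : ℝ) 1) := uniqueDiffOn_Icc one_pos
  have hI : Icc (1 / 2 - 1 / 2 : ℝ) (1 / 2 + 1 / 2) = Icc 0 1 := by norm_num
  obtain ⟨ξ, hξ, h⟩ := exists_integral_sub_simpson_eq (m := 1 / 2) (r := 1 / 2)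
    (g := fun k => iteratedDerivWithin k f (Icc 0 1)) (by norm_num)
    (fun k hk => by rw [hI]; exact hf.continuousOn_iteratedDerivWithin (by norm_cast; omega) hs)
    (fun k hk x hx => hf.hasDerivAt_iteratedDerivWithin (by norm_cast) hs
      (Icc_mem_nhds (by linarith [hx.1]) (by linarith [hx.2])))
  refine ⟨ξ, Ioo_subset_Icc_self (by norm_num at hξ; exact hξ), ?_⟩
  norm_num [iteratedDerivWithin_zero] at h
  linarith
end
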